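/- arXiv:2406.17278 — 2 statements merged into one kernel-verified Lean document; each statement's English description precedes it below -/
import Mathlib

section
/- Let A, Â ∈ ℝ^{d×r} with columns a₁,…,a_r and â₁,…,â_r. Assume ‖AᵀA − I_r‖₂ ≤ δ, that ‖â_j − a_j‖₂ ≤ ε for every j, and that √(1−δ) − √r·ε > 0. Then ÂᵀÂ is invertible and ‖Â(ÂᵀÂ)^{-1}‖₂ ≤ ( √(1−δ) − √r·ε )^{-1}; in particular every column b̂_j of B̂ = Â(ÂᵀÂ)^{-1} satisfies ‖b̂_j‖₂ ≤ ( √(1−δ) − √r·ε )^{-1}. -/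
/-!
From `‖AᵀA - 1‖ ≤ δ` one gets `‖Ax‖² ≥ (1 - δ)‖x‖²`, and perturbing the columns by at most `ε`
moves `Ax` by at most `ε ∑ |xⱼ| ≤ √r ε ‖x‖`; hence `Â` is bounded below by
`c = √(1 - δ) - √r ε > 0`. A matrix bounded below has an injective, hence invertible, Gram matrix,
and if `(ÂᵀÂ) x = y` then `‖Âx‖² = ⟨x, y⟩ ≤ ‖x‖ ‖y‖ ≤ c⁻¹ ‖Âx‖ ‖y‖`, so `‖Â(ÂᵀÂ)⁻¹‖ ≤ c⁻¹`.
Columns are images of basis vectors, so they obey the same bound.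
-/

open Matrix

noncomputable def specNorm {m n : Type*} [Fintype m] [Fintype n] [DecidableEq n]
    (M : Matrix m n ℝ) : ℝ :=
  ‖LinearMap.toContinuousLinearMap (Matrix.toEuclideanLin M)‖

noncomputable def euclNorm {n : Type*} [Fintype n] (x : n → ℝ) : ℝ :=
  Real.sqrt (∑ i, x i ^ 2)

section
variable {m n : Type*} [Fintype m] [Fintype n]

lemma euclNorm_eq_norm_toLp (x : n → ℝ) : euclNorm x = ‖WithLp.toLp 2 x‖ := by
  simp [euclNorm, EuclideanSpace.norm_eq]

lemma euclNorm_nonneg (x : n → ℝ) : 0 ≤ euclNorm x := Real.sqrt_nonneg _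

lemma euclNorm_eq_zero {x : n → ℝ} : euclNorm x = 0 ↔ x = 0 := by
  simp [euclNorm_eq_norm_toLp]

lemma euclNorm_neg (x : n → ℝ) : euclNorm (-x) = euclNorm x := by
  simp [euclNorm]

lemma euclNorm_sub_le (x y : n → ℝ) : euclNorm (x - y) ≤ euclNorm x + euclNorm y := by
  simpa [euclNorm_eq_norm_toLp] using norm_sub_le (WithLp.toLp 2 x) (WithLp.toLp 2 y)

lemma euclNorm_sq (x : n → ℝ) : euclNorm x ^ 2 = x ⬝ᵥ x := by
  rw [euclNorm, Real.sq_sqrt (by positivity)]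
  simp [dotProduct, sq]

lemma dotProduct_le_euclNorm_mul (x y : n → ℝ) : x ⬝ᵥ y ≤ euclNorm x * euclNorm y :=
  Real.sum_mul_le_sqrt_mul_sqrt _ x y

lemma sum_abs_le_sqrt_card_mul_euclNorm (x : n → ℝ) :
    ∑ j, |x j| ≤ √(Fintype.card n) * euclNorm x := by
  simpa [euclNorm, mul_comm] using
    Real.sum_mul_le_sqrt_mul_sqrt Finset.univ (fun j => |x j|) 1

lemma euclNorm_mulVec_sq (M : Matrix m n ℝ) (x : n → ℝ) :
    euclNorm (M *ᵥ x) ^ 2 = x ⬝ᵥ (Mᵀ * M) *ᵥ x := by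
  rw [euclNorm_sq, ← mulVec_mulVec, dotProduct_mulVec x, vecMul_transpose]

lemma euclNorm_mulVec_le_of_euclNorm_col_le {E : Matrix m n ℝ} {ε : ℝ}
    (hE : ∀ j, euclNorm (fun i => E i j) ≤ ε) (x : n → ℝ) :
    euclNorm (E *ᵥ x) ≤ √(Fintype.card n) * ε * euclNorm x := by
  -- without columns nothing forces `0 ≤ ε`
  rcases isEmpty_or_nonempty n with hn | ⟨⟨j₀⟩⟩
  · simp [euclNorm, mulVec, dotProduct]
  have hε : 0 ≤ ε := (euclNorm_nonneg _).trans (hE j₀)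
  calc euclNorm (E *ᵥ x) = ‖∑ j, x j • WithLp.toLp 2 (fun i => E i j)‖ := by
        rw [euclNorm_eq_norm_toLp]; congr 1; ext i; simp [mulVec, dotProduct, mul_comm]
    _ ≤ ∑ j, |x j| * euclNorm (fun i => E i j) := by
        refine (norm_sum_le _ _).trans_eq ?_
        simp [norm_smul, euclNorm_eq_norm_toLp]
    _ ≤ ∑ j, |x j| * ε := by gcongr with j; exact hE j
    _ = (∑ j, |x j|) * ε := (Finset.sum_mul _ _ _).symm
    _ ≤ (√(Fintype.card n) * euclNorm x) * ε := by
        gcongr; exact sum_abs_le_sqrt_card_mul_euclNorm x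
    _ = √(Fintype.card n) * ε * euclNorm x := by ring

variable [DecidableEq n]

lemma euclNorm_mulVec_le (M : Matrix m n ℝ) (x : n → ℝ) :
    euclNorm (M *ᵥ x) ≤ specNorm M * euclNorm x := by
  simpa [specNorm, euclNorm_eq_norm_toLp] using
    (LinearMap.toContinuousLinearMap (toEuclideanLin M)).le_opNorm (WithLp.toLp 2 x)

lemma specNorm_le_of_euclNorm_mulVec_le (M : Matrix m n ℝ) {C : ℝ} (hC : 0 ≤ C)
    (h : ∀ x, euclNorm (M *ᵥ x) ≤ C * euclNorm x) : specNorm M ≤ C :=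
  ContinuousLinearMap.opNorm_le_bound _ hC fun x => by
    simpa [euclNorm_eq_norm_toLp, toLpLin_apply] using h x.ofLp

lemma sqrt_one_sub_mul_euclNorm_le_euclNorm_mulVec {A : Matrix m n ℝ} {δ : ℝ}
    (hδ : specNorm (Aᵀ * A - 1) ≤ δ) (x : n → ℝ) :
    √(1 - δ) * euclNorm x ≤ euclNorm (A *ᵥ x) := by
  have hdev : -(x ⬝ᵥ (Aᵀ * A - 1) *ᵥ x) ≤ δ * euclNorm x ^ 2 := calc
    -(x ⬝ᵥ (Aᵀ * A - 1) *ᵥ x) = (-x) ⬝ᵥ (Aᵀ * A - 1) *ᵥ x := (neg_dotProduct _ _).symm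
    _ ≤ euclNorm x * euclNorm ((Aᵀ * A - 1) *ᵥ x) := by
      simpa [euclNorm_neg] using dotProduct_le_euclNorm_mul (-x) ((Aᵀ * A - 1) *ᵥ x)
    _ ≤ euclNorm x * (δ * euclNorm x) := by
      gcongr
      · exact euclNorm_nonneg x
      · exact (euclNorm_mulVec_le _ x).trans (by gcongr; exact euclNorm_nonneg x)
    _ = δ * euclNorm x ^ 2 := by ring
  have hquad : (1 - δ) * euclNorm x ^ 2 ≤ euclNorm (A *ᵥ x) ^ 2 := by
    rw [euclNorm_mulVec_sq, sub_mulVec, one_mulVec, dotProduct_sub, ← euclNorm_sq] at *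
    linarith
  calc √(1 - δ) * euclNorm x = √((1 - δ) * euclNorm x ^ 2) := by
        rw [Real.sqrt_mul' _ (sq_nonneg _), Real.sqrt_sq (euclNorm_nonneg x)]
    _ ≤ √(euclNorm (A *ᵥ x) ^ 2) := Real.sqrt_le_sqrt hquad
    _ = euclNorm (A *ᵥ x) := Real.sqrt_sq (euclNorm_nonneg _)

lemma euclNorm_col_le_specNorm (M : Matrix m n ℝ) (j : n) :
    euclNorm (fun i => M i j) ≤ specNorm M := by
  calc euclNorm (fun i => M i j) = euclNorm (M *ᵥ Pi.single j 1) := by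
        rw [mulVec_single_one]; rfl
    _ ≤ specNorm M * euclNorm (Pi.single j 1) := euclNorm_mulVec_le M _
    _ = specNorm M := by
      rw [euclNorm_eq_norm_toLp, PiLp.toLp_single, PiLp.norm_single, norm_one, mul_one]

lemma isUnit_transpose_mul_self_of_bounded_below {M : Matrix m n ℝ} {c : ℝ} (hc : 0 < c)
    (h : ∀ x, c * euclNorm x ≤ euclNorm (M *ᵥ x)) : IsUnit (Mᵀ * M) := by
  refine mulVec_injective_iff_isUnit.mp fun u v huv => sub_eq_zero.mp ?_
  have hM : euclNorm (M *ᵥ (u - v)) = 0 := by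
    rw [← pow_eq_zero_iff two_ne_zero, euclNorm_mulVec_sq, mulVec_sub, huv, sub_self,
      dotProduct_zero]
  have := h (u - v)
  rw [hM] at this
  exact euclNorm_eq_zero.mp <|
    le_antisymm (nonpos_of_mul_nonpos_right this hc) (euclNorm_nonneg _)

lemma specNorm_mul_inv_transpose_mul_self_le {M : Matrix m n ℝ} {c : ℝ} (hc : 0 < c)
    (h : ∀ x, c * euclNorm x ≤ euclNorm (M *ᵥ x)) : specNorm (M * (Mᵀ * M)⁻¹) ≤ c⁻¹ := by
  have hG := (isUnit_iff_isUnit_det _).mp (isUnit_transpose_mul_self_of_bounded_below hc h)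
  refine specNorm_le_of_euclNorm_mulVec_le _ (inv_nonneg.mpr hc.le) fun y => ?_
  set x := (Mᵀ * M)⁻¹ *ᵥ y
  have hy : (Mᵀ * M) *ᵥ x = y := by rw [mulVec_mulVec, mul_nonsing_inv _ hG, one_mulVec]
  rw [← mulVec_mulVec, le_inv_mul_iff₀ hc]
  set t := euclNorm (M *ᵥ x)
  have key : c * t * t ≤ euclNorm y * t := calc
    c * t * t = c * (x ⬝ᵥ y) := by rw [← hy, ← euclNorm_mulVec_sq]; ring
    _ ≤ c * (euclNorm x * euclNorm y) := by gcongr; exact dotProduct_le_euclNorm_mul x y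
    _ ≤ t * euclNorm y := by rw [← mul_assoc]; gcongr; exacts [euclNorm_nonneg y, h x]
    _ = euclNorm y * t := mul_comm _ _
  rcases (euclNorm_nonneg (M *ᵥ x)).eq_or_lt with ht | ht
  · simpa only [t, ← ht, mul_zero] using euclNorm_nonneg y
  · exact le_of_mul_le_mul_right key ht

end

theorem stmt_5 {d r : ℕ} {δ ε : ℝ}
    (A Ahat : Matrix (Fin d) (Fin r) ℝ)
    (hδ : specNorm (Aᵀ * A - 1) ≤ δ)
    (hε : ∀ j, euclNorm (fun i => Ahat i j - A i j) ≤ ε)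
    (hpos : 0 < Real.sqrt (1 - δ) - Real.sqrt (r : ℝ) * ε) :
    IsUnit (Ahatᵀ * Ahat) ∧
      specNorm (Ahat * (Ahatᵀ * Ahat)⁻¹) ≤ (Real.sqrt (1 - δ) - Real.sqrt (r : ℝ) * ε)⁻¹ ∧
      ∀ j, euclNorm (fun i => (Ahat * (Ahatᵀ * Ahat)⁻¹) i j)
        ≤ (Real.sqrt (1 - δ) - Real.sqrt (r : ℝ) * ε)⁻¹ := by
  have hlower : ∀ x, (√(1 - δ) - √(r : ℝ) * ε) * euclNorm x ≤ euclNorm (Ahat *ᵥ x) := by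
    intro x
    have hA := sqrt_one_sub_mul_euclNorm_le_euclNorm_mulVec hδ x
    have hE := euclNorm_mulVec_le_of_euclNorm_col_le (E := Ahat - A) (by simpa using hε) x
    have htri : euclNorm (A *ᵥ x) ≤ euclNorm (Ahat *ᵥ x) + euclNorm ((Ahat - A) *ᵥ x) := by
      simpa [sub_mulVec] using euclNorm_sub_le (Ahat *ᵥ x) ((Ahat - A) *ᵥ x)
    rw [Fintype.card_fin] at hE
    linarith
  have hB := specNorm_mul_inv_transpose_mul_self_le hpos hlower
  exact ⟨isUnit_transpose_mul_self_of_bounded_below hpos hlower, hB,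
    fun j => (euclNorm_col_le_specNorm _ j).trans hB⟩
end

section
/- Let K ≥ 1 and for each k = 1, …, K let A_k ∈ ℝ^{d_k×r} be a matrix whose columns are unit vectors (i.e. Σ_j A_k(j,i)² = 1 for every i). Define A ∈ ℝ^{(d₁⋯d_K)×r} whose rows are indexed by tuples (j₁,…,j_K) with j_k ∈ {1,…,d_k} and whose entries are A((j₁,…,j_K), i) = ∏_{k=1}^{K} A_k(j_k, i). Then ‖AᵀA − I_r‖₂ ≤ ∏_{k=1}^{K} ‖A_kᵀA_k − I_r‖₂. -/
open Matrix

lemma specNorm_nonneg {m n : Type*} [Fintype m] [Fintype n] [DecidableEq n]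
    (M : Matrix m n ℝ) : 0 ≤ specNorm M := norm_nonneg _

lemma mulVec_sq_le {m n : Type*} [Fintype m] [Fintype n] [DecidableEq n]
    (M : Matrix m n ℝ) (x : n → ℝ) :
    ∑ i, (M.mulVec x i) ^ 2 ≤ specNorm M ^ 2 * ∑ j, x j ^ 2 := by
  have h := (LinearMap.toContinuousLinearMap (Matrix.toEuclideanLin M)).le_opNorm
    ((WithLp.equiv 2 (n → ℝ)).symm x)
  have hx : ‖(WithLp.equiv 2 (n → ℝ)).symm x‖ = Real.sqrt (∑ j, x j ^ 2) := by
    rw [EuclideanSpace.norm_eq]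
    simp [Real.norm_eq_abs, sq_abs]
  have hfx : ‖LinearMap.toContinuousLinearMap (Matrix.toEuclideanLin M)
      ((WithLp.equiv 2 (n → ℝ)).symm x)‖ = Real.sqrt (∑ i, (M.mulVec x i) ^ 2) := by
    rw [LinearMap.coe_toContinuousLinearMap', Matrix.toEuclideanLin_apply]
    rw [EuclideanSpace.norm_eq]
    simp [Real.norm_eq_abs, sq_abs]
  rw [hfx, hx] at h
  have h1 : (0:ℝ) ≤ ∑ i, (M.mulVec x i) ^ 2 := Finset.sum_nonneg fun i _ => sq_nonneg _
  have h2 : (0:ℝ) ≤ ∑ j, x j ^ 2 := Finset.sum_nonneg fun i _ => sq_nonneg _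
  calc ∑ i, (M.mulVec x i) ^ 2 = Real.sqrt (∑ i, (M.mulVec x i) ^ 2) ^ 2 := (Real.sq_sqrt h1).symm
    _ ≤ (specNorm M * Real.sqrt (∑ j, x j ^ 2)) ^ 2 := by
        apply pow_le_pow_left₀ (Real.sqrt_nonneg _) h
    _ = specNorm M ^ 2 * ∑ j, x j ^ 2 := by
        rw [mul_pow, Real.sq_sqrt h2]

lemma specNorm_le_of {m n : Type*} [Fintype m] [Fintype n] [DecidableEq n]
    (M : Matrix m n ℝ) (C : ℝ) (hC : 0 ≤ C)
    (h : ∀ x : n → ℝ, ∑ i, (M.mulVec x i) ^ 2 ≤ C ^ 2 * ∑ j, x j ^ 2) :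
    specNorm M ≤ C := by
  apply ContinuousLinearMap.opNorm_le_bound _ hC
  intro v
  have hv : ‖v‖ = Real.sqrt (∑ j, ((WithLp.equiv 2 (n → ℝ)) v j) ^ 2) := by
    rw [EuclideanSpace.norm_eq]; simp [Real.norm_eq_abs, sq_abs]
  have hfv : ‖LinearMap.toContinuousLinearMap (Matrix.toEuclideanLin M) v‖
      = Real.sqrt (∑ i, (M.mulVec ((WithLp.equiv 2 (n → ℝ)) v) i) ^ 2) := by
    rw [LinearMap.coe_toContinuousLinearMap', Matrix.toEuclideanLin_apply]
    rw [EuclideanSpace.norm_eq]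
    simp [Real.norm_eq_abs, sq_abs]
  rw [hfv, hv]
  have := h ((WithLp.equiv 2 (n → ℝ)) v)
  calc Real.sqrt (∑ i, (M.mulVec ((WithLp.equiv 2 (n → ℝ)) v) i) ^ 2)
      ≤ Real.sqrt (C ^ 2 * ∑ j, ((WithLp.equiv 2 (n → ℝ)) v j) ^ 2) := Real.sqrt_le_sqrt this
    _ = C * Real.sqrt (∑ j, ((WithLp.equiv 2 (n → ℝ)) v j) ^ 2) := by
        rw [Real.sqrt_mul (sq_nonneg C), Real.sqrt_sq hC]

lemma key (r : ℕ) : ∀ (K : ℕ) (E : Fin K → Matrix (Fin r) (Fin r) ℝ)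
    (v : (Fin K → Fin r) → ℝ),
    ∑ p : Fin K → Fin r, (∑ q : Fin K → Fin r, (∏ k, E k (p k) (q k)) * v q) ^ 2
      ≤ (∏ k, specNorm (E k)) ^ 2 * ∑ q : Fin K → Fin r, v q ^ 2 := by
  intro K
  induction K with
  | zero => intro E v; simp
  | succ K ih =>
    intro E v
    set c0 := specNorm (E 0) with hc0
    set C := ∏ k : Fin K, specNorm (E k.succ) with hC
    have hc0n : 0 ≤ c0 := specNorm_nonneg _
    have hCn : 0 ≤ C := Finset.prod_nonneg fun k _ => specNorm_nonneg _
    -- reindex along Fin.cons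
    set w : Fin r → (Fin K → Fin r) → ℝ := fun b p =>
      ∑ q : Fin K → Fin r, (∏ k, E k.succ (p k) (q k)) * v (Fin.cons b q) with hw
    have reidx : ∀ f : (Fin (K+1) → Fin r) → ℝ,
        ∑ p : Fin (K+1) → Fin r, f p = ∑ a : Fin r, ∑ p : Fin K → Fin r, f (Fin.cons a p) := by
      intro f
      rw [← Fintype.sum_equiv (Fin.consEquiv fun _ => Fin r)
        (fun x => f ((Fin.consEquiv fun _ => Fin r) x)) f (fun x => rfl)]
      rw [Fintype.sum_prod_type]
      simp [Fin.consEquiv]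
    rw [reidx, reidx (fun q => v q ^ 2), Fin.prod_univ_succ]
    have inner : ∀ a (p : Fin K → Fin r),
        (∑ q : Fin (K+1) → Fin r, (∏ k, E k ((Fin.cons a p : Fin (K+1) → Fin r) k) (q k)) * v q)
        = (E 0).mulVec (fun b => w b p) a := by
      intro a p
      rw [reidx]
      simp only [Matrix.mulVec, dotProduct, hw]
      refine Finset.sum_congr rfl fun b _ => ?_
      rw [Finset.mul_sum]
      refine Finset.sum_congr rfl fun q _ => ?_
      rw [Fin.prod_univ_succ]
      simp only [Fin.cons_zero, Fin.cons_succ]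
      ring
    calc ∑ a, ∑ p : Fin K → Fin r,
          (∑ q : Fin (K+1) → Fin r, (∏ k, E k ((Fin.cons a p : Fin (K+1) → Fin r) k) (q k)) * v q) ^ 2
        = ∑ p : Fin K → Fin r, ∑ a, ((E 0).mulVec (fun b => w b p) a) ^ 2 := by
          rw [Finset.sum_comm]
          exact Finset.sum_congr rfl fun p _ => Finset.sum_congr rfl fun a _ => by rw [inner]
      _ ≤ ∑ p : Fin K → Fin r, c0 ^ 2 * ∑ b, (w b p) ^ 2 := by
          apply Finset.sum_le_sum
          intro p _
          exact mulVec_sq_le (E 0) _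
      _ = c0 ^ 2 * ∑ b, ∑ p : Fin K → Fin r, (w b p) ^ 2 := by
          rw [← Finset.mul_sum, Finset.sum_comm]
      _ ≤ c0 ^ 2 * ∑ b, C ^ 2 * ∑ q : Fin K → Fin r, v (Fin.cons b q) ^ 2 := by
          apply mul_le_mul_of_nonneg_left _ (sq_nonneg c0)
          apply Finset.sum_le_sum
          intro b _
          exact ih (fun k => E k.succ) (fun q => v (Fin.cons b q))
      _ = (c0 * C) ^ 2 * ∑ a, ∑ q : Fin K → Fin r, v (Fin.cons a q) ^ 2 := by
          rw [← Finset.mul_sum]; ring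

theorem stmt_13 {K r : ℕ} (hK : 1 ≤ K) (d : Fin K → ℕ)
    (A : ∀ k : Fin K, Matrix (Fin (d k)) (Fin r) ℝ)
    (hunit : ∀ k i, ∑ j, A k j i ^ 2 = 1) :
    specNorm
        ((Matrix.of fun (p : ∀ k : Fin K, Fin (d k)) (i : Fin r) => ∏ k, A k (p k) i)ᵀ *
            (Matrix.of fun (p : ∀ k : Fin K, Fin (d k)) (i : Fin r) => ∏ k, A k (p k) i)
          - 1)
      ≤ ∏ k, specNorm ((A k)ᵀ * A k - 1) := by
  have k0 : Fin K := ⟨0, hK⟩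
  set E : Fin K → Matrix (Fin r) (Fin r) ℝ := fun k => (A k)ᵀ * A k - 1 with hE
  set M : Matrix (Fin r) (Fin r) ℝ :=
    ((Matrix.of fun (p : ∀ k : Fin K, Fin (d k)) (i : Fin r) => ∏ k, A k (p k) i)ᵀ *
        (Matrix.of fun (p : ∀ k : Fin K, Fin (d k)) (i : Fin r) => ∏ k, A k (p k) i) - 1) with hM
  -- Gram entries
  have gram : ∀ k (i j : Fin r), ((A k)ᵀ * A k) i j = ∑ j', A k j' i * A k j' j := by
    intro k i j
    simp [Matrix.mul_apply, Matrix.transpose_apply]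
  have bigGram : ∀ i j : Fin r,
      ((Matrix.of fun (p : ∀ k : Fin K, Fin (d k)) (i : Fin r) => ∏ k, A k (p k) i)ᵀ *
        (Matrix.of fun (p : ∀ k : Fin K, Fin (d k)) (i : Fin r) => ∏ k, A k (p k) i)) i j
      = ∏ k, ∑ j', A k j' i * A k j' j := by
    intro i j
    rw [Finset.prod_univ_sum]
    simp only [Matrix.mul_apply, Matrix.transpose_apply, Matrix.of_apply, Fintype.piFinset_univ]
    refine Finset.sum_congr rfl fun p _ => ?_
    rw [← Finset.prod_mul_distrib]
  have entry : ∀ i j : Fin r, M i j = ∏ k, E k i j := by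
    intro i j
    rw [hM, Matrix.sub_apply, bigGram, Matrix.one_apply]
    by_cases hij : i = j
    · subst hij
      have h1 : ∀ k : Fin K, ∑ j', A k j' i * A k j' i = 1 := by
        intro k
        rw [← hunit k i]
        exact Finset.sum_congr rfl fun j' _ => (sq (A k j' i)).symm
      have h2 : ∀ k : Fin K, E k i i = 0 := by
        intro k
        rw [hE]
        simp only [Matrix.sub_apply, Matrix.one_apply_eq, gram, h1]
        ring
      have hR : ∏ k, E k i i = 0 := Finset.prod_eq_zero (Finset.mem_univ k0) (h2 k0)
      rw [hR]
      simp [h1]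
    · simp only [if_neg hij, sub_zero]
      refine Finset.prod_congr rfl fun k _ => ?_
      rw [hE]
      simp [Matrix.sub_apply, Matrix.one_apply_ne hij, gram]
  -- apply norm bound
  apply specNorm_le_of _ _ (Finset.prod_nonneg fun k _ => specNorm_nonneg _)
  intro x
  have hconst_inj : Function.Injective (fun j : Fin r => (Function.const (Fin K) j)) := by
    intro a b h
    exact congrFun h k0
  set v : (Fin K → Fin r) → ℝ := fun q =>
    if q ∈ Finset.univ.image (fun j : Fin r => Function.const (Fin K) j)
    then x (q k0) else 0 with hv
  have hvconst : ∀ j, v (Function.const (Fin K) j) = x j := by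
    intro j
    rw [hv]
    simp only [if_pos (Finset.mem_image_of_mem _ (Finset.mem_univ j))]
    rfl
  have hvsum : ∑ q : Fin K → Fin r, v q ^ 2 = ∑ j, x j ^ 2 := by
    rw [← Finset.sum_subset (Finset.subset_univ
      (Finset.univ.image (fun j : Fin r => Function.const (Fin K) j)))
      (fun q _ hq => by rw [hv]; simp only [if_neg hq]; ring)]
    rw [Finset.sum_image (fun a _ b _ h => hconst_inj h)]
    exact Finset.sum_congr rfl fun j _ => by rw [hvconst]
  have hrow : ∀ i : Fin r, M.mulVec x i
      = ∑ q : Fin K → Fin r, (∏ k, E k i (q k)) * v q := by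
    intro i
    rw [← Finset.sum_subset (Finset.subset_univ
      (Finset.univ.image (fun j : Fin r => Function.const (Fin K) j)))
      (fun q _ hq => by rw [hv]; simp only [if_neg hq]; ring)]
    rw [Finset.sum_image (fun a _ b _ h => hconst_inj h)]
    simp only [Matrix.mulVec, dotProduct]
    refine Finset.sum_congr rfl fun j _ => ?_
    rw [hvconst, entry]
    rfl
  calc ∑ i, (M.mulVec x i) ^ 2
      = ∑ i, (∑ q : Fin K → Fin r, (∏ k, E k i (q k)) * v q) ^ 2 := by
        exact Finset.sum_congr rfl fun i _ => by rw [hrow]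
    _ ≤ ∑ p : Fin K → Fin r, (∑ q : Fin K → Fin r, (∏ k, E k (p k) (q k)) * v q) ^ 2 := by
        have h := Finset.sum_le_sum_of_subset_of_nonneg
          (Finset.subset_univ (Finset.univ.image (fun j : Fin r => Function.const (Fin K) j)))
          (fun q _ _ => sq_nonneg (∑ q' : Fin K → Fin r, (∏ k, E k (q k) (q' k)) * v q'))
        rw [Finset.sum_image (fun a _ b _ h => hconst_inj h)] at h
        exact h
    _ ≤ (∏ k, specNorm (E k)) ^ 2 * ∑ q : Fin K → Fin r, v q ^ 2 := key r K E v
    _ = (∏ k, specNorm (E k)) ^ 2 * ∑ j, x j ^ 2 := by rw [hvsum]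
end
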